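/- If x is a denting point of a bounded closed convex set B in a Banach space, then x is a strongly extreme point of B. -/

import Mathlib

/-!
Given `ε > 0`, take a slice `{w ∈ B | t < f w}` of diameter `< ε / 2` containing `x`. By
continuity of `f`, the midpoints `mₙ` of `yₙ, zₙ` eventually lie in the slice; since `f mₙ` is
the average of `f yₙ` and `f zₙ`, one of `yₙ, zₙ` lies in it as well, and both are at distance
`‖yₙ - zₙ‖ / 2` from `mₙ`.
-/

open Filter Topology

section Slice

variable {E : Type*} [SeminormedAddCommGroup E] [NormedSpace ℝ E]

theorem QuasiconvexOn.le_max_midpoint {B : Set E} {f : E → ℝ} (hf : QuasiconvexOn ℝ B f)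
    {y z : E} (hy : y ∈ B) (hz : z ∈ B) : f (midpoint ℝ y z) ≤ max (f y) (f z) := by
  rw [midpoint_eq_smul_add, smul_add]
  exact (quasiconvexOn_iff_le_max.1 hf).2 hy hz (by norm_num) (by norm_num) (by norm_num)

theorem norm_sub_lt_of_midpoint_mem_slice {B : Set E} {f : E → ℝ} (hf : QuasiconvexOn ℝ B f)
    {t r : ℝ} (hslice : ∀ u ∈ {w ∈ B | t < f w}, ∀ v ∈ {w ∈ B | t < f w}, ‖u - v‖ < r)
    {y z : E} (hy : y ∈ B) (hz : z ∈ B) (hmid : t < f (midpoint ℝ y z)) :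
    ‖y - z‖ < 2 * r := by
  have hmB : midpoint ℝ y z ∈ B := hf.convex.midpoint_mem hy hz
  have hleft : ‖y - midpoint ℝ y z‖ = ‖y - z‖ / 2 := by
    simpa [dist_eq_norm, div_eq_inv_mul] using dist_left_midpoint (𝕜 := ℝ) y z
  have hright : ‖z - midpoint ℝ y z‖ = ‖y - z‖ / 2 := by
    simpa [dist_eq_norm, div_eq_inv_mul] using dist_right_midpoint (𝕜 := ℝ) y z
  rcases lt_max_iff.1 (hmid.trans_le (hf.le_max_midpoint hy hz)) with hfy | hfz
  · linarith [hslice y ⟨hy, hfy⟩ _ ⟨hmB, hmid⟩]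
  · linarith [hslice z ⟨hz, hfz⟩ _ ⟨hmB, hmid⟩]

end Slice

theorem stmt1 {X : Type*} [NormedAddCommGroup X] [NormedSpace ℝ X]
    (B : Set X) (hconv : Convex ℝ B)
    (x : X)
    (hdent : ∀ ε > (0 : ℝ), ∃ (f : X →L[ℝ] ℝ) (δ : ℝ), f ≠ 0 ∧ 0 < δ ∧
      x ∈ {y ∈ B | sSup (f '' B) - δ < f y} ∧
      ∀ y ∈ {y ∈ B | sSup (f '' B) - δ < f y},
        ∀ z ∈ {y ∈ B | sSup (f '' B) - δ < f y}, ‖y - z‖ < ε) :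
    ∀ (y z : ℕ → X), (∀ n, y n ∈ B) → (∀ n, z n ∈ B) →
      Tendsto (fun n => ‖x - (1/2 : ℝ) • (y n + z n)‖) atTop (nhds 0) →
      Tendsto (fun n => ‖y n - z n‖) atTop (nhds 0) := by
  intro y z hy hz hmid
  have hm : Tendsto (fun n => midpoint ℝ (y n) (z n)) atTop (𝓝 x) := by
    rw [tendsto_iff_norm_sub_tendsto_zero]
    simpa [midpoint_eq_smul_add, norm_sub_rev] using hmid
  refine Metric.tendsto_nhds.2 fun ε hε => ?_
  obtain ⟨f, δ, -, -, ⟨-, hfx⟩, hslice⟩ := hdent (ε / 2) (half_pos hε)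
  have hf : QuasiconvexOn ℝ B f := (f.toLinearMap.convexOn hconv).quasiconvexOn
  filter_upwards [((f.continuous.tendsto x).comp hm).eventually_const_lt hfx] with n hn
  have := norm_sub_lt_of_midpoint_mem_slice hf hslice (hy n) (hz n) hn
  rw [dist_zero_right, norm_norm]
  linarith
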